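/- Let n and k be positive integers with 2k ≤ n. Then the total number, over all ordered binary trees t with n leaves, of unordered pairs {v, w} of distinct nodes of t such that the fringe subtrees t(v) and t(w) are identical as ordered trees and both have exactly k leaves, equals C_{n−2k+1}·binom(n−2k+2, 2)·C_{k−1}, where C_m denotes the m-th Catalan number. Consequently, the expected number X_{n,k}^{(2)} of such pairs in a uniformly random ordered binary tree with n leaves equals C_{n−2k+1}·binom(n−2k+2, 2)·C_{k−1}/C_{n−1}. -/

import Mathlib

open Filter Finset
open scoped Classical

/-- Ordered binary trees: every node has exactly two or no children. -/
inductive BT : Type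
  | leaf : BT
  | node : BT → BT → BT
deriving DecidableEq

namespace BT

/-- The size of a binary tree: its number of leaves. -/
def size : BT → ℕ
  | leaf => 1
  | node l r => size l + size r

/-- The multiset of all fringe subtrees of a tree (one for every node). -/
def fringe : BT → Multiset BT
  | leaf => {leaf}
  | node l r => node l r ::ₘ (fringe l + fringe r)

/-- The finset of all ordered binary trees with `n` leaves. -/
def treesOfSize : ℕ → Finset BT
  | 0 => ∅
  | 1 => {leaf}
  | n + 2 =>
    (Finset.range (n + 1)).attach.biUnion fun k =>
      ((treesOfSize (k.1 + 1)) ×ˢ (treesOfSize (n + 1 - k.1))).image fun p => node p.1 p.2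
  decreasing_by
    · have := Finset.mem_range.mp k.2; omega
    · omega

/-- Boolean test whether two ordered binary trees are isomorphic as unordered trees. -/
def isoB : BT → BT → Bool
  | leaf, leaf => true
  | leaf, node _ _ => false
  | node _ _, leaf => false
  | node l1 r1, node l2 r2 => (isoB l1 l2 && isoB r1 r2) || (isoB l1 r2 && isoB r1 l2)

/-- An injective encoding of ordered binary trees into the natural numbers. -/
def encode : BT → ℕ
  | leaf => 0
  | node l r => Nat.pair (encode l) (encode r) + 1

/-- The canonical representative of the isomorphism class of a binary tree:
two trees are isomorphic (equal as unordered trees) iff their canonical forms agree. -/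
def canon : BT → BT
  | leaf => leaf
  | node l r =>
    let l' := canon l
    let r' := canon r
    if encode l' ≤ encode r' then node l' r' else node r' l'

/-- Number of isomorphism classes of unordered binary trees represented among
the fringe subtrees of `t`. -/
def isoClasses (t : BT) : ℕ := ((fringe t).toFinset.image canon).card

/-- Number of distinct ordered binary trees occurring among the fringe subtrees of `t`. -/
def numDistinct (t : BT) : ℕ := (fringe t).toFinset.card

/-- The probability of a tree under the binary search tree model. -/
noncomputable def pbst (t : BT) : ℝ :=
  ((fringe t).map fun s => if 1 < size s then (1 : ℝ) / ((size s : ℝ) - 1) else 1).prod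

/-- Expectation of `f` under the uniform distribution on trees with `n` leaves. -/
noncomputable def unifE (n : ℕ) (f : BT → ℝ) : ℝ :=
  (∑ t ∈ treesOfSize n, f t) / (treesOfSize n).card

/-- Probability of an event under the uniform distribution on trees with `n` leaves. -/
noncomputable def unifP (n : ℕ) (p : BT → Prop) : ℝ :=
  ((treesOfSize n).filter p).card / (treesOfSize n).card

/-- Expectation of `f` under the binary search tree distribution on trees with `n` leaves. -/
noncomputable def bstE (n : ℕ) (f : BT → ℝ) : ℝ :=
  ∑ t ∈ treesOfSize n, pbst t * f t

/-- Probability of an event under the binary search tree distribution on trees with `n` leaves. -/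
noncomputable def bstP (n : ℕ) (p : BT → Prop) : ℝ :=
  ∑ t ∈ (treesOfSize n).filter p, pbst t

end BT

/-! Write `C` for the counting series of trees by leaves and, for `f : BT → ℕ`, `F_f` for the
series whose `n`-th coefficient is the total of `f` over the trees with `n` leaves. Splitting at
the root, an additive parameter `f (node l r) = f l + f r + g (node l r)` satisfies
`F_f = 2 C F_f + F_g`, and as `C` has no constant term this linear equation determines `F_f` from
`F_g`. For the number of occurrences of `s` as a fringe subtree `F_g = X ^ |s|`; for the number of
pairs of occurrences `F_g` is the square of the series of occurrences. Comparing with `s = leaf`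
gives `F_{pairs s} = X ^ (2 (|s| - 1)) F_{pairs leaf}` (collapse both copies of `s` to leaves),
and a tree with `m` leaves has `choose m 2` pairs of leaves. -/

theorem PowerSeries.eq_of_eq_mul_add {R : Type*} [Semiring R] {A B F G : PowerSeries R}
    (hA : PowerSeries.constantCoeff A = 0) (hF : F = A * F + B) (hG : G = A * G + B) :
    F = G := by
  ext n
  induction n using Nat.strong_induction_on with
  | _ n ih =>
    rw [hF, hG, map_add, map_add, PowerSeries.coeff_mul, PowerSeries.coeff_mul]
    congr 1
    refine Finset.sum_congr rfl fun p hp => ?_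
    rw [Finset.HasAntidiagonal.mem_antidiagonal] at hp
    rcases Nat.eq_zero_or_pos p.1 with h | h
    · simp [h, hA]
    · rw [ih p.2 (by omega)]

theorem Nat.add_choose_two (a b : ℕ) : (a + b).choose 2 = a.choose 2 + b.choose 2 + a * b := by
  rw [Nat.add_choose_eq]
  simp [Nat.sum_antidiagonal_succ]
  ring

namespace BT

open PowerSeries

lemma size_pos (t : BT) : 0 < size t := by
  induction t with
  | leaf => exact Nat.one_pos
  | node l r ihl _ => exact Nat.add_pos_left ihl _

lemma size_le_of_mem_fringe {s t : BT} (h : s ∈ fringe t) : size s ≤ size t := by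
  induction t with
  | leaf => simp_all [fringe]
  | node l r ihl ihr =>
    simp only [fringe, Multiset.mem_cons, Multiset.mem_add] at h
    rcases h with rfl | h | h
    · rfl
    · exact (ihl h).trans (Nat.le_add_right _ _)
    · exact (ihr h).trans (Nat.le_add_left _ _)

lemma count_fringe_eq_zero_of_size_lt {s t : BT} (h : size t < size s) :
    (fringe t).count s = 0 :=
  Multiset.count_eq_zero.mpr fun hs => (size_le_of_mem_fringe hs).not_gt h

lemma count_fringe_node (l r s : BT) : (fringe (node l r)).count s
    = (fringe l).count s + (fringe r).count s + if node l r = s then 1 else 0 := by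
  simp only [fringe, Multiset.count_cons, Multiset.count_add, eq_comm]

lemma count_fringe_leaf (t : BT) : (fringe t).count leaf = size t := by
  induction t with
  | leaf => simp [fringe, size]
  | node l r ihl ihr => rw [count_fringe_node, ihl, ihr, if_neg nofun, add_zero, size]

lemma choose_two_count_fringe_node (l r s : BT) : ((fringe (node l r)).count s).choose 2
    = ((fringe l).count s).choose 2 + ((fringe r).count s).choose 2
      + (fringe l).count s * (fringe r).count s := by
  rw [count_fringe_node]
  split_ifs with h
  · have hl : size l < size s := by have := size_pos r; rw [← h, size]; omega
    have hr : size r < size s := by have := size_pos l; rw [← h, size]; omega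
    simp [count_fringe_eq_zero_of_size_lt hl, count_fringe_eq_zero_of_size_lt hr]
  · rw [add_zero, Nat.add_choose_two]

lemma mem_treesOfSize {n : ℕ} {t : BT} : t ∈ treesOfSize n ↔ size t = n := by
  induction n using Nat.strong_induction_on generalizing t with
  | _ n ih =>
    match n, t with
    | 0, t => simp [treesOfSize, (size_pos t).ne']
    | 1, leaf => simp [treesOfSize, size]
    | 1, node l r => simp [treesOfSize, size]; grind [size_pos l, size_pos r]
    | n + 2, leaf => simp [treesOfSize, size]
    | n + 2, node l r =>
      rw [treesOfSize]
      simp only [mem_biUnion, mem_attach, mem_image, mem_product, true_and, Subtype.exists,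
        mem_range, node.injEq, Prod.exists, size]
      constructor
      · rintro ⟨k, hk, l, r, ⟨hl, hr⟩, rfl, rfl⟩
        rw [ih _ (by omega)] at hl hr
        omega
      · intro h
        refine ⟨size l - 1, ?_, l, r, ⟨?_, ?_⟩, rfl, rfl⟩ <;> grind [size_pos l, size_pos r]

lemma sum_treesOfSize_add_two {M : Type*} [AddCommMonoid M] (n : ℕ) (f : BT → M) :
    ∑ t ∈ treesOfSize (n + 2), f t
      = ∑ p ∈ antidiagonal (n + 2), ∑ l ∈ treesOfSize p.1, ∑ r ∈ treesOfSize p.2,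
          f (node l r) := by
  simp only [← sum_product', sum_sigma']
  symm
  refine sum_bij (fun x _ => node x.2.1 x.2.2) ?_ ?_ ?_ fun _ _ => rfl
  · rintro ⟨⟨a, b⟩, l, r⟩ hx
    simp only [mem_sigma, HasAntidiagonal.mem_antidiagonal, mem_product, mem_treesOfSize] at hx
    rw [mem_treesOfSize, size, hx.2.1, hx.2.2, hx.1]
  · rintro ⟨⟨a, b⟩, l, r⟩ hx ⟨⟨a', b'⟩, l', r'⟩ hx' h
    simp only [mem_sigma, HasAntidiagonal.mem_antidiagonal, mem_product, mem_treesOfSize] at hx hx'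
    obtain ⟨rfl, rfl⟩ := node.inj h
    grind
  · intro t ht
    rw [mem_treesOfSize] at ht
    cases t with
    | leaf => simp [size] at ht
    | node l r =>
      exact ⟨⟨(size l, size r), l, r⟩, by simpa [mem_treesOfSize, size] using ht, rfl⟩

def totalGF (f : BT → ℕ) : ℕ⟦X⟧ := mk fun n => ∑ t ∈ treesOfSize n, f t

def nodeGF (f : BT → BT → ℕ) : ℕ⟦X⟧ :=
  mk fun n => ∑ p ∈ antidiagonal n, ∑ l ∈ treesOfSize p.1, ∑ r ∈ treesOfSize p.2, f l r

lemma coeff_totalGF (f : BT → ℕ) (n : ℕ) : coeff n (totalGF f) = ∑ t ∈ treesOfSize n, f t :=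
  coeff_mk _ _

lemma constantCoeff_totalGF (f : BT → ℕ) : constantCoeff (totalGF f) = 0 := by
  simp [totalGF, treesOfSize]

lemma totalGF_eq (f : BT → ℕ) : totalGF f = f leaf • X + nodeGF fun l r => f (node l r) := by
  ext (_ | _ | n)
  · simp [coeff_totalGF, nodeGF, treesOfSize]
  · simp [coeff_totalGF, nodeGF, treesOfSize, Nat.sum_antidiagonal_succ]
  · rw [coeff_totalGF, map_add, map_nsmul, coeff_X, nodeGF, coeff_mk, sum_treesOfSize_add_two]
    simp

lemma nodeGF_add (f g : BT → BT → ℕ) : nodeGF (f + g) = nodeGF f + nodeGF g := by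
  ext n
  simp [nodeGF, sum_add_distrib]

lemma nodeGF_mul (u v : BT → ℕ) : nodeGF (fun l r => u l * v r) = totalGF u * totalGF v := by
  ext n
  simp [nodeGF, coeff_mul, coeff_totalGF, sum_mul_sum]

lemma totalGF_eq_of_node (f g : BT → ℕ) (hleaf : f leaf = g leaf)
    (hnode : ∀ l r, f (node l r) = f l + f r + g (node l r)) :
    totalGF f = 2 * totalGF 1 * totalGF f + totalGF g := by
  have hsplit : (fun l r => f (node l r))
      = (fun l r => f l * (1 : BT → ℕ) r) + (fun l r => (1 : BT → ℕ) l * f r)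
        + fun l r => g (node l r) := by
    ext l r
    simp [hnode]
  conv_lhs => rw [totalGF_eq, hsplit, nodeGF_add, nodeGF_add, nodeGF_mul, nodeGF_mul]
  rw [totalGF_eq g, hleaf]
  ring

lemma totalGF_ite_eq (s : BT) : totalGF (fun t => if t = s then 1 else 0) = X ^ size s := by
  ext n
  simp [coeff_totalGF, coeff_X_pow, mem_treesOfSize, eq_comm]

lemma card_treesOfSize (n : ℕ) : #(treesOfSize (n + 1)) = catalan n := by
  have hC : totalGF 1 = X + totalGF 1 ^ 2 := by
    conv_lhs => rw [totalGF_eq]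
    simp [sq, ← nodeGF_mul]
  induction n using Nat.strong_induction_on with
  | _ n ih =>
    rcases n with _ | n
    · simp [treesOfSize]
    · have := congrArg (coeff (n + 2)) hC
      rw [map_add, coeff_X, if_neg (by omega), zero_add, sq, coeff_mul,
        Nat.sum_antidiagonal_succ, Nat.sum_antidiagonal_succ'] at this
      simp only [coeff_zero_eq_constantCoeff_apply, constantCoeff_totalGF, zero_mul, mul_zero,
        zero_add, coeff_totalGF, Pi.one_apply, sum_const, smul_eq_mul, mul_one] at this
      rw [this, catalan_succ']
      refine sum_congr rfl fun p hp => ?_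
      rw [HasAntidiagonal.mem_antidiagonal] at hp
      rw [ih p.1 (by omega), ih p.2 (by omega)]

lemma totalGF_count_fringe (s : BT) : totalGF (fun t => (fringe t).count s)
    = 2 * totalGF 1 * totalGF (fun t => (fringe t).count s) + X ^ size s := by
  rw [← totalGF_ite_eq]
  exact totalGF_eq_of_node _ _ (by simp [fringe, Multiset.count_singleton, eq_comm])
    fun l r => count_fringe_node l r s

lemma totalGF_count_fringe_eq (s : BT) : totalGF (fun t => (fringe t).count s)
    = X ^ (size s - 1) * totalGF (fun t => (fringe t).count leaf) := by
  obtain ⟨k, hk⟩ : ∃ k, size s = k + 1 := ⟨size s - 1, by have := size_pos s; omega⟩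
  refine PowerSeries.eq_of_eq_mul_add (by rw [map_mul, constantCoeff_totalGF, mul_zero])
    (totalGF_count_fringe s) ?_
  conv_lhs => rw [totalGF_count_fringe leaf]
  rw [hk, Nat.add_sub_cancel, size, pow_succ]
  ring

def prodChildren (u : BT → ℕ) : BT → ℕ
  | leaf => 0
  | node l r => u l * u r

lemma totalGF_prodChildren (u : BT → ℕ) : totalGF (prodChildren u) = totalGF u ^ 2 := by
  rw [totalGF_eq, sq, ← nodeGF_mul]
  simp [prodChildren]

lemma totalGF_choose_two_count_fringe (s : BT) :
    totalGF (fun t => ((fringe t).count s).choose 2)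
      = 2 * totalGF 1 * totalGF (fun t => ((fringe t).count s).choose 2)
        + totalGF (fun t => (fringe t).count s) ^ 2 := by
  rw [← totalGF_prodChildren]
  refine totalGF_eq_of_node _ _ ?_ fun l r => choose_two_count_fringe_node l r s
  simp only [fringe, prodChildren, Multiset.count_singleton]
  split_ifs <;> rfl

lemma totalGF_choose_two_count_fringe_eq (s : BT) :
    totalGF (fun t => ((fringe t).count s).choose 2)
      = X ^ (2 * (size s - 1)) * totalGF (fun t => ((fringe t).count leaf).choose 2) := by
  refine PowerSeries.eq_of_eq_mul_add (by rw [map_mul, constantCoeff_totalGF, mul_zero])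
    (totalGF_choose_two_count_fringe s) ?_
  conv_lhs => rw [totalGF_choose_two_count_fringe leaf]
  rw [totalGF_count_fringe_eq s]
  ring

lemma sum_choose_two_count_fringe (s : BT) {n : ℕ} (h : 2 * size s ≤ n) :
    ∑ t ∈ treesOfSize n, ((fringe t).count s).choose 2
      = (n - 2 * size s + 2).choose 2 * catalan (n - 2 * size s + 1) := by
  have hs := size_pos s
  rw [← coeff_totalGF, totalGF_choose_two_count_fringe_eq, coeff_X_pow_mul', if_pos (by omega),
    coeff_totalGF, sum_congr rfl fun t ht => by rw [count_fringe_leaf, mem_treesOfSize.mp ht],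
    sum_const, smul_eq_mul, show n - 2 * (size s - 1) = n - 2 * size s + 1 + 1 by omega,
    card_treesOfSize, mul_comm]

end BT

open BT in
/-- For positive integers `n, k` with `2k ≤ n`, the total number, over all
ordered binary trees `t` with `n` leaves, of unordered pairs of distinct nodes whose
fringe subtrees are identical as ordered trees and have exactly `k` leaves equals
`C_{n−2k+1}·binom(n−2k+2, 2)·C_{k−1}`; consequently the expected number of such pairs in
a uniformly random ordered binary tree with `n` leaves equals
`C_{n−2k+1}·binom(n−2k+2, 2)·C_{k−1}/C_{n−1}`. -/
theorem total_identical_fringe_pairs_uniform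
    (n k : ℕ) (hk : 0 < k) (hkn : 2 * k ≤ n) :
    (∑ t ∈ treesOfSize n, ∑ s ∈ treesOfSize k, Nat.choose ((fringe t).count s) 2)
        = catalan (n - 2 * k + 1) * Nat.choose (n - 2 * k + 2) 2 * catalan (k - 1) ∧
    (∑ t ∈ treesOfSize n,
        ∑ s ∈ treesOfSize k, (Nat.choose ((fringe t).count s) 2 : ℝ)) / (catalan (n - 1) : ℝ)
      = (catalan (n - 2 * k + 1) * Nat.choose (n - 2 * k + 2) 2 * catalan (k - 1) : ℝ)
          / (catalan (n - 1) : ℝ) := by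
  have htotal : (∑ t ∈ treesOfSize n, ∑ s ∈ treesOfSize k, Nat.choose ((fringe t).count s) 2)
      = catalan (n - 2 * k + 1) * Nat.choose (n - 2 * k + 2) 2 * catalan (k - 1) := by
    obtain ⟨j, rfl⟩ : ∃ j, k = j + 1 := ⟨k - 1, by omega⟩
    rw [sum_comm, sum_congr rfl fun s hs => by
        rw [sum_choose_two_count_fringe s (mem_treesOfSize.mp hs ▸ hkn), mem_treesOfSize.mp hs],
      sum_const, card_treesOfSize, smul_eq_mul, Nat.add_sub_cancel]
    ring
  exact ⟨htotal, by exact_mod_cast congrArg (fun x : ℕ => (x : ℝ) / catalan (n - 1)) htotal⟩
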